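/- Let n > 2 and let M = {x^a y^{n-a} : 0 ≤ a ≤ n} be the minimal generating set of the ideal (x,y)^n in the polynomial ring k[x,y]. For every total order ≻ on M there exists a Lyubeznik-critical subset σ ⊆ M with exactly 3 elements. Consequently, every such size-3 Lyubeznik-critical subset has a bridge, so the ideal (x,y)^n is not Lyubeznik. -/

import Mathlib

/-!
Write `g_a = x^a y^(n-a)`. If `a < b < c` then `g_b` divides `lcm(g_a, g_c)`, so every set of
three generators has a bridge. Conversely, a generator dividing `lcm(F)` without lying in `F` sits
strictly between two members of `F` (compare `y`-degrees for one, `x`-degrees for the other). For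
`σ = {g_a, g_(a+1), g_(a+2)}` this forces the witness to be `g_(a+1)` and both neighbours to be
above it in the order, so `σ` is Lyubeznik-critical unless `g_(a+1)` is smaller than both
neighbours, which cannot happen for both `a = 0` and `a = 1`.
-/

open scoped Classical

noncomputable section

namespace ChauHaMaithani

variable {V : Type*}

/-- The lcm of a finite set of monomials (exponent vectors): pointwise maximum. -/
def mlcm (σ : Finset (V → ℕ)) : V → ℕ := fun v => σ.sup fun g => g v

/-- `m` is a bridge of `σ`: `m ∈ σ` and dropping `m` does not change the lcm. -/
def IsBridge (σ : Finset (V → ℕ)) (m : V → ℕ) : Prop :=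
  m ∈ σ ∧ mlcm (σ.erase m) = mlcm σ

/-- `m` is a gap of `σ`: `m ∉ σ` and adding `m` does not change the lcm. -/
def IsGap (σ : Finset (V → ℕ)) (m : V → ℕ) : Prop :=
  m ∉ σ ∧ mlcm (insert m σ) = mlcm σ

/-- A total order `≻` on monomials is encoded by a ranking function `ord`:
`m ≻ m'` iff `ord m' < ord m` (injectivity on the generating set is assumed separately).
`m` is a true gap of `σ` if it is a gap and every bridge of `σ ∪ {m}` dominated by `m`
is already a bridge of `σ`. -/
def IsTrueGap (ord : (V → ℕ) → ℕ) (σ : Finset (V → ℕ)) (m : V → ℕ) : Prop :=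
  IsGap σ m ∧ ∀ m', IsBridge (insert m σ) m' → ord m' < ord m → IsBridge σ m'

/-- `σ` is type-1: it has a true gap (in `M`) dominating none of its bridges. -/
def Type1 (M : Finset (V → ℕ)) (ord : (V → ℕ) → ℕ) (σ : Finset (V → ℕ)) : Prop :=
  ∃ m ∈ M, IsTrueGap ord σ m ∧ ∀ b, IsBridge σ b → ¬ ord b < ord m

/-- `σ` is potentially-type-2: it has a bridge dominating none of its true gaps. -/
def PotType2 (M : Finset (V → ℕ)) (ord : (V → ℕ) → ℕ) (σ : Finset (V → ℕ)) : Prop :=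
  ∃ b, IsBridge σ b ∧ ∀ m ∈ M, IsTrueGap ord σ m → ¬ ord m < ord b

/-- `b` is the `≻`-smallest bridge of `σ`. -/
def IsSBridge (ord : (V → ℕ) → ℕ) (σ : Finset (V → ℕ)) (b : V → ℕ) : Prop :=
  IsBridge σ b ∧ ∀ b', IsBridge σ b' → ord b ≤ ord b'

/-- `σ` is type-2. -/
def Type2 (M : Finset (V → ℕ)) (ord : (V → ℕ) → ℕ) (σ : Finset (V → ℕ)) : Prop :=
  PotType2 M ord σ ∧
    ∀ σ' : Finset (V → ℕ), σ' ⊆ M → σ' ≠ σ → PotType2 M ord σ' →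
      ∀ b b', IsSBridge ord σ b → IsSBridge ord σ' b' →
        σ'.erase b' = σ.erase b → ord b < ord b'

/-- `M` (the minimal generating set of a monomial ideal) is bridge-friendly w.r.t. `ord`:
every potentially-type-2 subset is type-2. -/
def BridgeFriendlyWrt (M : Finset (V → ℕ)) (ord : (V → ℕ) → ℕ) : Prop :=
  ∀ σ ⊆ M, PotType2 M ord σ → Type2 M ord σ

/-- `M` is bridge-friendly: bridge-friendly w.r.t. some total order on `M`. -/
def BridgeFriendly (M : Finset (V → ℕ)) : Prop :=
  ∃ ord : (V → ℕ) → ℕ, Set.InjOn ord M ∧ BridgeFriendlyWrt M ord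

/-- `σ = {m_1 ≻ ⋯ ≻ m_k} ⊆ M` is Lyubeznik-critical w.r.t. `ord`: there is no `m ∈ M` with
`m_t ≻ m` and `m ∣ lcm(m_1, …, m_t)` for some `1 < t ≤ k`. -/
def LyubCritical (M : Finset (V → ℕ)) (ord : (V → ℕ) → ℕ) (σ : Finset (V → ℕ)) : Prop :=
  σ ⊆ M ∧ ¬ ∃ m ∈ M, ∃ t ∈ σ, (∃ u ∈ σ, ord t < ord u) ∧ ord m < ord t ∧
      ∀ v, m v ≤ mlcm (σ.filter fun g => ord t ≤ ord g) v

/-- `M` is Lyubeznik: for some total order on `M`, no Lyubeznik-critical subset has a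
bridge (equivalently, the associated Lyubeznik resolution is minimal). -/
def IsLyubeznik (M : Finset (V → ℕ)) : Prop :=
  ∃ ord : (V → ℕ) → ℕ, Set.InjOn ord M ∧
    ∀ σ : Finset (V → ℕ), LyubCritical M ord σ → ∀ b, ¬ IsBridge σ b

/-- The quadratic monomial `xy` attached to an edge `e = {x,y}`. -/
def edgeMon (e : Sym2 V) : V → ℕ := fun v => if v ∈ e then 1 else 0

/-- `mingens(I(G))`: the edge monomials of `G`. -/
def edgeGens [Fintype V] (G : SimpleGraph V) : Finset (V → ℕ) :=
  (Finset.univ.filter fun e : Sym2 V => e ∈ G.edgeSet).image edgeMon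

/-- `mingens(I(G)^n)`: the monomials that are products of `n` edges of `G`. -/
def edgePowGens [Fintype V] (G : SimpleGraph V) (n : ℕ) : Finset (V → ℕ) :=
  (Finset.univ.filter fun f : Fin n → Sym2 V => ∀ i, f i ∈ G.edgeSet).image
    fun f => ∑ i, edgeMon (f i)

/-- A graph is chordal if it contains no induced cycle of length at least 4. -/
def Chordal (G : SimpleGraph V) : Prop :=
  ∀ n, 4 ≤ n → IsEmpty (SimpleGraph.cycleGraph n ↪g G)

/-- `mingens((x,y)^n)`: the monomials `x^a y^{n-a}` for `0 ≤ a ≤ n`, as exponent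
vectors on `Fin 2`. -/
def xyPowGens (n : ℕ) : Finset (Fin 2 → ℕ) :=
  (Finset.range (n + 1)).image fun a => fun i : Fin 2 => if i = 0 then a else n - a

lemma mlcm_eq_sup (σ : Finset (V → ℕ)) : mlcm σ = σ.sup id := by
  funext v
  simp [mlcm, Finset.sup_apply]

lemma isBridge_iff {σ : Finset (V → ℕ)} {m : V → ℕ} :
    IsBridge σ m ↔ m ∈ σ ∧ m ≤ mlcm (σ.erase m) := by
  refine and_congr_right fun hm => ?_
  have hsplit : σ.sup id = m ⊔ (σ.erase m).sup id := by
    conv_lhs => rw [← Finset.insert_erase hm]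
    exact Finset.sup_insert
  rw [mlcm_eq_sup, mlcm_eq_sup, hsplit, eq_comm, sup_eq_right]

lemma isBridge_of_le_sup {σ : Finset (V → ℕ)} {m p q : V → ℕ} (hm : m ∈ σ) (hp : p ∈ σ)
    (hq : q ∈ σ) (hpm : p ≠ m) (hqm : q ≠ m) (h : m ≤ p ⊔ q) : IsBridge σ m := by
  refine isBridge_iff.2 ⟨hm, h.trans ?_⟩
  rw [mlcm_eq_sup]
  exact sup_le (Finset.le_sup (f := id) (Finset.mem_erase.2 ⟨hpm, hp⟩))
    (Finset.le_sup (f := id) (Finset.mem_erase.2 ⟨hqm, hq⟩))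

def xyPowGen (n a : ℕ) : Fin 2 → ℕ := fun i => if i = 0 then a else n - a

lemma xyPowGen_injective (n : ℕ) : Function.Injective (xyPowGen n) :=
  fun _ _ h => congrFun h 0

lemma mem_xyPowGens {n : ℕ} {m : Fin 2 → ℕ} : m ∈ xyPowGens n ↔ m 0 ≤ n ∧ m 1 = n - m 0 := by
  simp only [xyPowGens, Finset.mem_image, Finset.mem_range_succ_iff]
  constructor
  · rintro ⟨a, ha, rfl⟩
    simp [ha]
  · rintro ⟨h0, h1⟩
    exact ⟨m 0, h0, funext fun i => by fin_cases i <;> simp [h1]⟩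

lemma xyPowGen_mem {n a : ℕ} (h : a ≤ n) : xyPowGen n a ∈ xyPowGens n :=
  mem_xyPowGens.2 ⟨h, rfl⟩

lemma eq_xyPowGen_of_mem {n : ℕ} {m : Fin 2 → ℕ} (hm : m ∈ xyPowGens n) :
    m = xyPowGen n (m 0) :=
  funext fun i => by fin_cases i <;> simp [xyPowGen, (mem_xyPowGens.1 hm).2]

lemma exists_isBridge_of_two_lt_card {n : ℕ} {σ : Finset (Fin 2 → ℕ)}
    (hσ : σ ⊆ xyPowGens n) (hcard : 2 < σ.card) : ∃ b, IsBridge σ b := by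
  have hne : σ.Nonempty := Finset.card_pos.1 (by omega)
  obtain ⟨lo, hlo, hlo_min⟩ := σ.exists_min_image (· 0) hne
  obtain ⟨hi, hhi, hhi_max⟩ := σ.exists_max_image (· 0) hne
  obtain ⟨b, hb, hb_ne⟩ := Finset.exists_mem_notMem_of_card_lt_card
    (Finset.card_le_two.trans_lt hcard : ({lo, hi} : Finset _).card < σ.card)
  simp only [Finset.mem_insert, Finset.mem_singleton, not_or] at hb_ne
  have hb_le : b ≤ lo ⊔ hi := by
    intro i
    fin_cases i
    · exact le_sup_of_le_right (hhi_max b hb)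
    · refine le_sup_of_le_left ?_
      simp only [Fin.mk_one, (mem_xyPowGens.1 (hσ hb)).2, (mem_xyPowGens.1 (hσ hlo)).2]
      exact Nat.sub_le_sub_left (hlo_min b hb) n
  exact ⟨b, isBridge_of_le_sup hb hlo hhi (Ne.symm hb_ne.1) (Ne.symm hb_ne.2) hb_le⟩

lemma exists_lt_lt_of_le_mlcm {n : ℕ} {F : Finset (Fin 2 → ℕ)} {m : Fin 2 → ℕ}
    (hF : F ⊆ xyPowGens n) (hne : F.Nonempty) (hm : m ∈ xyPowGens n) (hmF : m ∉ F)
    (h : m ≤ mlcm F) : (∃ p ∈ F, p 0 < m 0) ∧ ∃ q ∈ F, m 0 < q 0 := by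
  obtain ⟨p, hp, hp_sup⟩ := F.exists_mem_eq_sup hne (· 1)
  obtain ⟨q, hq, hq_sup⟩ := F.exists_mem_eq_sup hne (· 0)
  have hm1 : m 1 ≤ p 1 := (h 1).trans_eq hp_sup
  have hm0 : m 0 ≤ q 0 := (h 0).trans_eq hq_sup
  have hm0_ne : ∀ g ∈ F, m 0 ≠ g 0 := fun g hg hmg =>
    hmF (by rwa [eq_xyPowGen_of_mem hm, hmg, ← eq_xyPowGen_of_mem (hF hg)])
  have hmp := hm0_ne p hp
  have hmq := hm0_ne q hq
  obtain ⟨-, hm1'⟩ := mem_xyPowGens.1 hm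
  obtain ⟨hp0, hp1⟩ := mem_xyPowGens.1 (hF hp)
  exact ⟨⟨p, hp, by omega⟩, q, hq, by omega⟩

lemma lyubCritical_of_not_isLocalMin {n a : ℕ} (ha : a + 2 ≤ n) (ord : (Fin 2 → ℕ) → ℕ)
    (hmid : ¬ (ord (xyPowGen n (a + 1)) < ord (xyPowGen n a) ∧
      ord (xyPowGen n (a + 1)) < ord (xyPowGen n (a + 2)))) :
    LyubCritical (xyPowGens n) ord {xyPowGen n a, xyPowGen n (a + 1), xyPowGen n (a + 2)} := by
  set σ : Finset (Fin 2 → ℕ) := {xyPowGen n a, xyPowGen n (a + 1), xyPowGen n (a + 2)}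
  have hσM : σ ⊆ xyPowGens n := by
    simp only [σ, Finset.insert_subset_iff, Finset.singleton_subset_iff]
    exact ⟨xyPowGen_mem (by omega), xyPowGen_mem (by omega), xyPowGen_mem ha⟩
  have hσ_range : ∀ g ∈ σ, a ≤ g 0 ∧ g 0 ≤ a + 2 := by
    simp only [σ, Finset.mem_insert, Finset.mem_singleton]
    rintro g (rfl | rfl | rfl) <;> simp [xyPowGen]
  refine ⟨hσM, ?_⟩
  rintro ⟨m, hm, t, ht, -, hmt, hdiv⟩
  set F := σ.filter fun g => ord t ≤ ord g
  have htF : t ∈ F := Finset.mem_filter.2 ⟨ht, le_rfl⟩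
  have hmF : m ∉ F := fun h => (Finset.mem_filter.1 h).2.not_gt hmt
  obtain ⟨⟨p, hp, hpm⟩, q, hq, hmq⟩ :=
    exists_lt_lt_of_le_mlcm ((Finset.filter_subset _ _).trans hσM) ⟨t, htF⟩ hm hmF hdiv
  obtain ⟨hpσ, htp⟩ := Finset.mem_filter.1 hp
  obtain ⟨hqσ, htq⟩ := Finset.mem_filter.1 hq
  have hp_range := hσ_range p hpσ
  have hq_range := hσ_range q hqσ
  have hm_eq : m = xyPowGen n (a + 1) := by rw [eq_xyPowGen_of_mem hm]; congr 1; omega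
  have hp_eq : p = xyPowGen n a := by rw [eq_xyPowGen_of_mem (hσM hpσ)]; congr 1; omega
  have hq_eq : q = xyPowGen n (a + 2) := by rw [eq_xyPowGen_of_mem (hσM hqσ)]; congr 1; omega
  subst hm_eq hp_eq hq_eq
  exact hmid ⟨hmt.trans_le htp, hmt.trans_le htq⟩

lemma exists_lyubCritical_card_eq_three {n : ℕ} (hn : 2 < n) (ord : (Fin 2 → ℕ) → ℕ) :
    ∃ σ, LyubCritical (xyPowGens n) ord σ ∧ σ.card = 3 := by
  have hcard : ∀ a, ({xyPowGen n a, xyPowGen n (a + 1), xyPowGen n (a + 2)} :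
      Finset (Fin 2 → ℕ)).card = 3 := fun a =>
    Finset.card_eq_three.2 ⟨_, _, _, (xyPowGen_injective n).ne (by omega),
      (xyPowGen_injective n).ne (by omega), (xyPowGen_injective n).ne (by omega), rfl⟩
  by_cases h1 : ord (xyPowGen n 1) < ord (xyPowGen n 0) ∧
      ord (xyPowGen n 1) < ord (xyPowGen n 2)
  · exact ⟨_, lyubCritical_of_not_isLocalMin (a := 1) (by omega) ord
      (fun h2 => lt_asymm h2.1 h1.2), hcard 1⟩
  · exact ⟨_, lyubCritical_of_not_isLocalMin (a := 0) (by omega) ord h1, hcard 0⟩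

/-- (From the proof of **Theorem 3.10**.) For `n > 2` and any total order on
`mingens((x,y)^n)` there is a Lyubeznik-critical subset with exactly 3 elements; every
such 3-element Lyubeznik-critical subset has a bridge; consequently `(x,y)^n` is not
Lyubeznik. -/
theorem xyPow_not_Lyubeznik (n : ℕ) (hn : 2 < n) :
    (∀ ord : (Fin 2 → ℕ) → ℕ, Set.InjOn ord (xyPowGens n) →
      ∃ σ : Finset (Fin 2 → ℕ), LyubCritical (xyPowGens n) ord σ ∧ σ.card = 3) ∧
    (∀ ord : (Fin 2 → ℕ) → ℕ, ∀ σ : Finset (Fin 2 → ℕ),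
      LyubCritical (xyPowGens n) ord σ → σ.card = 3 → ∃ b, IsBridge σ b) ∧
    ¬ IsLyubeznik (xyPowGens n) := by
  refine ⟨fun ord _ => exists_lyubCritical_card_eq_three hn ord,
    fun _ σ hσ hcard => exists_isBridge_of_two_lt_card hσ.1 (by omega), ?_⟩
  rintro ⟨ord, -, hminimal⟩
  obtain ⟨σ, hσ, hcard⟩ := exists_lyubCritical_card_eq_three hn ord
  obtain ⟨b, hb⟩ := exists_isBridge_of_two_lt_card hσ.1 (by omega)
  exact hminimal σ hσ b hb

end ChauHaMaithani
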